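/- Every non-signaling game is strongly completable. That is, if a game g ⊆ Σ^m × Σ^m admits a strategy ρ that solves g with probability 1 and whose S-marginals depend only on the inputs of the players in S (for every subset S of the players), then for every permutation σ of {1,…,m} the alternating statement ∀x_{σ(1)}∈Σ ∃y_{σ(1)}∈Σ ⋯ ∀x_{σ(m)}∈Σ ∃y_{σ(m)}∈Σ : (y_1,…,y_m) ∈ g(x_1,…,x_m) holds. -/

import Mathlib

/-- The alternating ∀∃-statement: given a list of (remaining) player indices and
partially-built input/output assignments, the adversary picks the next player's input and
we must pick that player's output, so that at the end the move is valid for the game `g`. -/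
def altGo {S : Type*} {m : ℕ} (g : (Fin m → S) → (Fin m → S) → Prop) :
    List (Fin m) → (Fin m → S) → (Fin m → S) → Prop
  | [], x, y => g x y
  | i :: rest, x, y =>
      ∀ xi : S, ∃ yi : S,
        altGo g rest (Function.update x i xi) (Function.update y i yi)

/-! Play the alternating game while keeping a point `y` of the support of `ρ x`, where `x` is the
current input and `y` agrees with the outputs chosen so far. When the adversary changes player
`i`'s input, the non-signaling condition for the players other than `i` says that the marginal on
`{i}ᶜ` is unchanged, so some `y'` in the support of the new distribution agrees with `y` off `i`;
answer `y' i`. When every player has moved, `y` is the output vector and lies in the support of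
`ρ x`, hence solves `g`. -/

theorem PMF.exists_mem_support_domRestrict_eq {α β : Type*} {p q : PMF (α → β)} {T : Set α}
    (h : p.map T.domRestrict = q.map T.domRestrict) {y : α → β} (hy : y ∈ p.support) :
    ∃ y' ∈ q.support, T.domRestrict y' = T.domRestrict y := by
  have hmem : T.domRestrict y ∈ (q.map T.domRestrict).support := by
    rw [← h, PMF.support_map]
    exact ⟨y, hy, rfl⟩
  rwa [PMF.support_map] at hmem

def IsUnilaterallyNonSignaling {ι α : Type*} (ρ : (ι → α) → PMF (ι → α)) : Prop :=
  ∀ (i : ι) (x x' : ι → α), (∀ j ≠ i, x j = x' j) →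
    (ρ x).map ({i}ᶜ : Set ι).domRestrict = (ρ x').map ({i}ᶜ : Set ι).domRestrict

section altGo

variable {S : Type*} {m : ℕ} {g : (Fin m → S) → (Fin m → S) → Prop}
  {ρ : (Fin m → S) → PMF (Fin m → S)}

theorem altGo_of_mem_support (hsolve : ∀ x : Fin m → S, ∀ y ∈ (ρ x).support, g x y)
    (hns : IsUnilaterallyNonSignaling ρ) :
    ∀ (L : List (Fin m)) (x y₀ y : Fin m → S), y ∈ (ρ x).support →
      (∀ j ∉ L, y j = y₀ j) → altGo g L x y₀
  | [], x, y₀, y, hy, hagree => by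
    obtain rfl : y = y₀ := funext fun j => hagree j List.not_mem_nil
    exact hsolve x y hy
  | i :: rest, x, y₀, y, hy, hagree => fun xi => by
    have hx : ∀ j ≠ i, x j = Function.update x i xi j := fun j hj =>
      (Function.update_of_ne hj _ _).symm
    obtain ⟨y', hy', hres⟩ := PMF.exists_mem_support_domRestrict_eq (hns i _ _ hx) hy
    refine ⟨y' i, altGo_of_mem_support hsolve hns rest _ _ y' hy' fun j hj => ?_⟩
    by_cases hji : j = i
    · subst hji
      rw [Function.update_self]
    · rw [Function.update_of_ne hji, show y' j = y j from congrFun hres ⟨j, hji⟩]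
      exact hagree j (by simp [hji, hj])

theorem altGo_of_forall_mem (hsolve : ∀ x : Fin m → S, ∀ y ∈ (ρ x).support, g x y)
    (hns : IsUnilaterallyNonSignaling ρ)
    {L : List (Fin m)} (hL : ∀ i, i ∈ L) (x y₀ : Fin m → S) : altGo g L x y₀ := by
  obtain ⟨y, hy⟩ := (ρ x).support_nonempty
  exact altGo_of_mem_support hsolve hns L x y₀ y hy fun j hj => absurd (hL j) hj

end altGo

theorem nonsignaling_implies_strongly_completable
    {S : Type*} {m : ℕ}
    (g : (Fin m → S) → (Fin m → S) → Prop)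
    (ρ : (Fin m → S) → PMF (Fin m → S))
    (hsolve : ∀ x : Fin m → S, ∀ y ∈ (ρ x).support, g x y)
    (hns : ∀ (T : Set (Fin m)) (x x' : Fin m → S),
        (∀ i ∈ T, x i = x' i) →
        (ρ x).map T.restrict = (ρ x').map T.restrict)
    (σ : Equiv.Perm (Fin m)) (x0 y0 : Fin m → S) :
    altGo g (List.ofFn ⇑σ) x0 y0 :=
  altGo_of_forall_mem hsolve (fun i x x' h => hns {i}ᶜ x x' h)
    (fun i => List.mem_ofFn.mpr (σ.surjective i)) x0 y0
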